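/- Let $E$ be a real inner product space, let $N, D$ be natural numbers with $1 \le D < N$, and let $k^- < 0$ be a real number with $|k^-| < D/(N-D)$. Then there exists a constant $C > 0$ (depending only on $N$, $D$ and $k^-$) such that for all vectors $u_1, \dots, u_N \in E$: $\sum_{l=1}^{D} \|u_l\|^2 + |k^-| \sum_{l=D+1}^{N} \|u_l\|^2 + \frac{2 k^-}{D} \sum_{l=D+1}^{N} \sum_{j=1}^{D} \langle u_l, u_j \rangle \;\ge\; C \sum_{l=1}^{N} \|u_l\|^2$. -/

import Mathlib

/-!
Bound every cross term by the weighted Young inequality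
`⟪u_l, u_j⟫ ≤ ε/2 ‖u_l‖² + 1/(2ε) ‖u_j‖²`. With `p = #A`, `q = #B` and `t = |k| q / p`, the form
is then at least `(1 - t/ε) ∑_A ‖u‖² + |k| (1 - ε) ∑_B ‖u‖²`, and the smallness condition `t < 1`
leaves room for any `ε ∈ (t, 1)`, e.g. `ε = (1 + t)/2`.
-/

open RealInnerProductSpace Finset

section

variable {E : Type*} [NormedAddCommGroup E] [InnerProductSpace ℝ E]

theorem real_inner_le_young {ε : ℝ} (hε : 0 < ε) (x y : E) :
    ⟪x, y⟫ ≤ ε / 2 * ‖x‖ ^ 2 + 1 / (2 * ε) * ‖y‖ ^ 2 := by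
  have hyoung := two_mul_le_add_sq (ε * ‖x‖) ‖y‖
  have hxy : ‖x‖ * ‖y‖ ≤ ε / 2 * ‖x‖ ^ 2 + 1 / (2 * ε) * ‖y‖ ^ 2 := by
    rw [← sub_nonneg]
    have hdiff : ε / 2 * ‖x‖ ^ 2 + 1 / (2 * ε) * ‖y‖ ^ 2 - ‖x‖ * ‖y‖
        = ((ε * ‖x‖) ^ 2 + ‖y‖ ^ 2 - 2 * (ε * ‖x‖) * ‖y‖) / (2 * ε) := by
      field_simp
    rw [hdiff]
    exact div_nonneg (by linarith) (by positivity)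
  exact (real_inner_le_norm x y).trans hxy

variable {ι : Type*} (A B : Finset ι)

theorem sum_sum_inner_le {ε : ℝ} (hε : 0 < ε) (u : ι → E) :
    ∑ l ∈ B, ∑ j ∈ A, ⟪u l, u j⟫
      ≤ ε / 2 * #A * ∑ l ∈ B, ‖u l‖ ^ 2 + #B / (2 * ε) * ∑ j ∈ A, ‖u j‖ ^ 2 :=
  calc ∑ l ∈ B, ∑ j ∈ A, ⟪u l, u j⟫
      ≤ ∑ l ∈ B, ∑ j ∈ A, (ε / 2 * ‖u l‖ ^ 2 + 1 / (2 * ε) * ‖u j‖ ^ 2) :=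
        sum_le_sum fun l _ => sum_le_sum fun j _ => real_inner_le_young hε (u l) (u j)
    _ = ε / 2 * #A * ∑ l ∈ B, ‖u l‖ ^ 2 + #B / (2 * ε) * ∑ j ∈ A, ‖u j‖ ^ 2 := by
        simp only [sum_add_distrib, sum_const, nsmul_eq_mul, ← mul_sum]
        ring

/-- `a_k(ψ, T₁ψ)` with `u_l = ψ_l'`, for the edges `A` of the first phase and `B` of the second. -/
noncomputable def tCoercivityForm (k : ℝ) (u : ι → E) : ℝ :=
  ∑ j ∈ A, ‖u j‖ ^ 2 + |k| * ∑ l ∈ B, ‖u l‖ ^ 2 + 2 * k / #A * ∑ l ∈ B, ∑ j ∈ A, ⟪u l, u j⟫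

theorem le_tCoercivityForm {k ε : ℝ} (hk : k ≤ 0) (hA : 0 < #A) (hε : 0 < ε) (u : ι → E) :
    (1 - |k| * #B / (#A * ε)) * ∑ j ∈ A, ‖u j‖ ^ 2 + |k| * (1 - ε) * ∑ l ∈ B, ‖u l‖ ^ 2
      ≤ tCoercivityForm A B k u := by
  have hA' : (0 : ℝ) < #A := by exact_mod_cast hA
  have hcross := mul_le_mul_of_nonpos_left (sum_sum_inner_le A B hε u)
    (div_nonpos_of_nonpos_of_nonneg (by linarith : 2 * k ≤ 0) hA'.le)
  rw [tCoercivityForm, abs_of_nonpos hk]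
  refine le_of_eq_of_le ?_ (add_le_add le_rfl hcross)
  field_simp
  ring

theorem exists_pos_mul_le_tCoercivityForm {k : ℝ} (hk : k < 0) (hsmall : |k| * #B < #A) :
    ∃ C : ℝ, 0 < C ∧ ∀ u : ι → E,
      C * (∑ j ∈ A, ‖u j‖ ^ 2 + ∑ l ∈ B, ‖u l‖ ^ 2) ≤ tCoercivityForm A B k u := by
  have hA : (0 : ℝ) < #A := (by positivity : 0 ≤ |k| * #B).trans_lt hsmall
  set t := |k| * #B / #A with ht
  have ht0 : 0 ≤ t := by positivity
  have ht1 : t < 1 := (div_lt_one hA).mpr hsmall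
  set ε := (1 + t) / 2 with hε_def
  have hε : 0 < ε := by positivity
  have hc₁ : 0 < 1 - |k| * #B / (#A * ε) := by
    rw [← div_div, sub_pos, div_lt_one hε, ← ht]
    linarith
  have hc₂ : 0 < |k| * (1 - ε) := mul_pos (abs_pos.mpr hk.ne) (by rw [hε_def]; linarith)
  refine ⟨min _ _, lt_min hc₁ hc₂, fun u => le_trans ?_
    (le_tCoercivityForm A B hk.le (by exact_mod_cast hA) hε u)⟩
  rw [mul_add]
  gcongr
  exacts [min_le_left _ _, min_le_right _ _]

end

theorem stmt_0 {E : Type*} [NormedAddCommGroup E] [InnerProductSpace ℝ E]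
    (N D : ℕ) (hDN : D < N)
    (kneg : ℝ) (hkneg : kneg < 0)
    (hsmall : |kneg| < (D : ℝ) / ((N : ℝ) - (D : ℝ))) :
    ∃ C : ℝ, 0 < C ∧ ∀ u : ℕ → E,
      (∑ l ∈ Finset.Icc 1 D, ‖u l‖ ^ 2)
        + |kneg| * (∑ l ∈ Finset.Icc (D + 1) N, ‖u l‖ ^ 2)
        + (2 * kneg / (D : ℝ)) *
            (∑ l ∈ Finset.Icc (D + 1) N, ∑ j ∈ Finset.Icc 1 D, ⟪u l, u j⟫)
      ≥ C * ∑ l ∈ Finset.Icc 1 N, ‖u l‖ ^ 2 := by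
  have hcardA : (#(Icc 1 D) : ℝ) = D := by simp
  have hcardB : (#(Icc (D + 1) N) : ℝ) = N - D := by
    rw [Nat.card_Icc, Nat.add_sub_add_right, Nat.cast_sub hDN.le]
  have hsplit (f : ℕ → ℝ) :
      ∑ l ∈ Icc 1 N, f l = ∑ l ∈ Icc 1 D, f l + ∑ l ∈ Icc (D + 1) N, f l := by
    simpa only [← Icc_add_one_left_eq_Ioc, zero_add] using
      (sum_Ioc_consecutive f (Nat.zero_le D) hDN.le).symm
  have hND : (0 : ℝ) < N - D := sub_pos.mpr (by exact_mod_cast hDN)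
  obtain ⟨C, hC, hcoer⟩ := exists_pos_mul_le_tCoercivityForm (E := E) (Icc 1 D) (Icc (D + 1) N)
    hkneg (by rwa [hcardA, hcardB, ← lt_div_iff₀ hND])
  refine ⟨C, hC, fun u => ?_⟩
  rw [hsplit, ← hcardA]
  exact hcoer u
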